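/- arXiv:2409.04336 — 4 statements merged into one kernel-verified Lean document; each statement's English description precedes it below -/
import Mathlib

section
/- Let Q₁ be the quadratic Cremona map of ℂ³ given by Q₁(x,y,z) = (y²−xz, x²−yz, z²−xy). Then there exists a nonzero constant c ∈ ℂ such that for every t ∈ ℂ one has the equality of polynomial 1-forms Q₁^*(Ω + t·Ξ) = c·((x+y+z)(x+τy+τ²z)(x+τ²y+τz))²·(Ω + (−t−1)·Ξ), i.e. the three coefficient polynomials (of dx, dy, dz) on the two sides agree. (Hence the strict transform of the Lins Neto foliation ℱ_t under Q₁ is ℱ_{−t−1}.) -/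
open MvPolynomial

noncomputable section

/-- τ = e^{2πi/3}, a primitive cube root of unity. -/
def τ : ℂ := Complex.exp (2 * Real.pi * Complex.I / 3)

/-- The polynomial ring ℂ[x,y,z]. -/
abbrev R3 : Type := MvPolynomial (Fin 3) ℂ

def Xv : R3 := X 0
def Yv : R3 := X 1
def Zv : R3 := X 2

/-- The 1-form Ω (coefficients of dx, dy, dz). -/
def Om : Fin 3 → R3 :=
  ![Zv * (Yv - Zv) * (Zv ^ 2 + Yv ^ 2 + Yv * Zv) * Yv,
    -(Zv * (Xv - Zv) * (Xv ^ 2 + Zv * Xv + Zv ^ 2) * Xv),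
    Xv * Yv * (Xv - Yv) * (Xv ^ 2 + Xv * Yv + Yv ^ 2)]

/-- The 1-form Ξ (coefficients of dx, dy, dz). -/
def Xi : Fin 3 → R3 :=
  ![-((Yv - Zv) * (Zv ^ 2 + Yv ^ 2 + Yv * Zv) * Xv ^ 2),
    (Xv - Zv) * (Xv ^ 2 + Zv * Xv + Zv ^ 2) * Yv ^ 2,
    -(Zv ^ 2 * (Xv - Yv) * (Xv ^ 2 + Xv * Yv + Yv ^ 2))]

/-- Pullback of the 1-form ω by the polynomial map Q:
`Q^*ω := (A∘Q) dQ₁ + (B∘Q) dQ₂ + (C∘Q) dQ₃`. -/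
def pullback (Q ω : Fin 3 → R3) : Fin 3 → R3 :=
  fun i => ∑ j, aeval Q (ω j) * pderiv i (Q j)

def Qmap : Fin 3 → R3 := ![Yv ^ 2 - Xv * Zv, Xv ^ 2 - Yv * Zv, Zv ^ 2 - Xv * Yv]

/-! `Q₁^*Ω = F² (Ω − Ξ)` and `Q₁^*Ξ = −F² Ξ` for `F = x³ + y³ + z³ − 3xyz`, and `F` factors as
`(x + y + z)(x + τy + τ²z)(x + τ²y + τz)` because `τ² + τ + 1 = 0`. Since the pullback is linear,
`Q₁^*(Ω + tΞ) = F² (Ω + (−t − 1)Ξ)`, so `c = 1` works. -/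

theorem IsPrimitiveRoot.sq_add_self_add_one {K : Type*} [CommRing K] [IsDomain K] {ω : K}
    (hω : IsPrimitiveRoot ω 3) : ω ^ 2 + ω + 1 = 0 := by
  simpa [Polynomial.cyclotomic_three] using hω.isRoot_cyclotomic (by decide)

theorem τ_sq_add_τ_add_one : τ ^ 2 + τ + 1 = 0 := by
  refine IsPrimitiveRoot.sq_add_self_add_one ?_
  simpa [τ] using Complex.isPrimitiveRoot_exp 3 (by norm_num)

theorem mul_mul_linear_forms_eq_sum_cubes_sub_three_mul {K : Type*} [CommRing K] {ω : K}
    (hω : ω ^ 2 + ω + 1 = 0) (a b c : K) :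
    (a + b + c) * (a + ω * b + ω ^ 2 * c) * (a + ω ^ 2 * b + ω * c) =
      a ^ 3 + b ^ 3 + c ^ 3 - 3 * (a * b * c) := by
  linear_combination ((a + b + c) * ((ω - 1) * (b ^ 2 + c ^ 2) + a * b + a * c +
    (ω ^ 2 - ω + 1) * b * c)) * hω

theorem pullback_add_C_mul (Q ω η : Fin 3 → R3) (t : ℂ) :
    pullback Q (fun i => ω i + C t * η i) = fun i => pullback Q ω i + C t * pullback Q η i := by
  funext i
  simp only [pullback, map_add, map_mul, aeval_C, algebraMap_eq, add_mul, mul_assoc,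
    Finset.sum_add_distrib, Finset.mul_sum]

theorem pullback_Qmap_Om :
    pullback Qmap Om =
      fun i => (Xv ^ 3 + Yv ^ 3 + Zv ^ 3 - 3 * (Xv * Yv * Zv)) ^ 2 * (Om i - Xi i) := by
  funext i
  fin_cases i <;>
  · simp only [pullback, Qmap, Om, Xi, Xv, Yv, Zv, Fin.sum_univ_three, Fin.isValue, Matrix.cons_val,
      Matrix.cons_val_zero, Matrix.cons_val_one, aeval_X, map_add, map_sub, map_mul, map_neg,
      map_pow, Derivation.leibniz, Derivation.leibniz_pow, pderiv_X, Pi.single_apply, Fin.reduceEq,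
      Fin.zero_eta, Fin.mk_one, Fin.reduceFinMk, ↓reduceIte, smul_eq_mul, nsmul_eq_mul]
    ring

theorem pullback_Qmap_Xi :
    pullback Qmap Xi = fun i => -(Xv ^ 3 + Yv ^ 3 + Zv ^ 3 - 3 * (Xv * Yv * Zv)) ^ 2 * Xi i := by
  funext i
  fin_cases i <;>
  · simp only [pullback, Qmap, Xi, Xv, Yv, Zv, Fin.sum_univ_three, Fin.isValue, Matrix.cons_val,
      Matrix.cons_val_zero, Matrix.cons_val_one, aeval_X, map_add, map_sub, map_mul, map_neg,
      map_pow, Derivation.leibniz, Derivation.leibniz_pow, pderiv_X, Pi.single_apply, Fin.reduceEq,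
      Fin.zero_eta, Fin.mk_one, Fin.reduceFinMk, ↓reduceIte, smul_eq_mul, nsmul_eq_mul]
    ring

theorem stmt_0 : ∃ c : ℂ, c ≠ 0 ∧ ∀ t : ℂ,
    pullback Qmap (fun i => Om i + C t * Xi i) =
      fun i => C c * ((Xv + Yv + Zv) * (Xv + C τ * Yv + C τ ^ 2 * Zv) * (Xv + C τ ^ 2 * Yv + C τ * Zv)) ^ 2 * (Om i + C (-t - 1) * Xi i) := by
  have hCτ : (C τ : R3) ^ 2 + C τ + 1 = 0 := by
    simpa using congrArg (C : ℂ →+* R3) τ_sq_add_τ_add_one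
  refine ⟨1, one_ne_zero, fun t => ?_⟩
  rw [pullback_add_C_mul, pullback_Qmap_Om, pullback_Qmap_Xi,
    mul_mul_linear_forms_eq_sum_cubes_sub_three_mul hCτ]
  funext i
  simp only [map_one, map_sub, map_neg]
  ring
end
end

section
/- For all integers m, n with |m| + |n| > 1, at least one of the following holds: m ≤ −1, or n ≤ −1, or 1 < m + n; consequently at least one of the three maps q₁, q_τ, q_{τ²} strictly decreases the norm N, i.e. there exists q ∈ {q₁, q_τ, q_{τ²}} with N(q(m,n)) < N(m,n). (Hence the reduction algorithm terminates: iterating such steps from any (m,n) ∈ ℤ×ℤ reaches a pair with |m| + |n| ≤ 1 in finitely many steps.) -/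
/-- The norm N(m,n) = m² + n² on ℤ[τ] ≅ ℤ×ℤ. -/
def Nrm (p : ℤ × ℤ) : ℤ := p.1 ^ 2 + p.2 ^ 2

/-- The map on parameters induced by Q₁ : t ↦ −t−1. -/
def q1 (p : ℤ × ℤ) : ℤ × ℤ := (-p.1 - 1, -p.2)

/-- The map on parameters induced by Q_τ : t ↦ −t−τ. -/
def qτ (p : ℤ × ℤ) : ℤ × ℤ := (-p.1, -p.2 - 1)

/-- The map on parameters induced by Q_{τ²} : t ↦ −t−τ². -/
def qτ2 (p : ℤ × ℤ) : ℤ × ℤ := (-p.1 + 1, -p.2 + 1)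

theorem stmt_9 : ∀ m n : ℤ, |m| + |n| > 1 →
    (m ≤ -1 ∨ n ≤ -1 ∨ 1 < m + n) ∧
    ∃ q ∈ ({q1, qτ, qτ2} : Set (ℤ × ℤ → ℤ × ℤ)), Nrm (q (m, n)) < Nrm (m, n) := by
  intro m n h
  have key : m ≤ -1 ∨ n ≤ -1 ∨ 1 < m + n := by
    rcases abs_cases m with ⟨h1, _⟩ | ⟨h1, _⟩ <;>
      rcases abs_cases n with ⟨h2, _⟩ | ⟨h2, _⟩ <;> omega
  refine ⟨key, ?_⟩
  rcases key with hm | hn | hmn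
  · exact ⟨q1, by simp, by simp only [Nrm, q1]; nlinarith⟩
  · exact ⟨qτ, by simp, by simp only [Nrm, qτ]; nlinarith⟩
  · exact ⟨qτ2, by simp, by simp only [Nrm, qτ2]; nlinarith⟩
end

section
/- Let F := (y−x)(z−x)(y−z) and G := (y−τx)(z−τ²x)(z−τy) in ℂ[x,y,z]. Then (Ω + Ξ) ∧ (G·dF − F·dG) = 0, i.e. all three coefficient polynomials of this wedge vanish identically. In other words, F/G is a rational first integral of the Lins Neto foliation ℱ₁, which is the pencil of cubics c₁·(y−x)(z−x)(y−z) + c₂·(y−τx)(z−τ²x)(z−τy) = 0. -/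
open MvPolynomial

noncomputable section

/-- The coefficients of `ω ∧ η` all vanish. -/
def WedgeZero (ω η : Fin 3 → R3) : Prop :=
  ∀ i j : Fin 3, ω i * η j - ω j * η i = 0

/-- The 1-form `G·dF − F·dG`. -/
def pencilForm (F G : R3) : Fin 3 → R3 :=
  fun i => G * pderiv i F - F * pderiv i G

def Fpol : R3 := (Yv - Xv) * (Zv - Xv) * (Yv - Zv)

def Gpol : R3 := (Yv - C τ * Xv) * (Zv - C τ ^ 2 * Xv) * (Zv - C τ * Yv)

lemma dF0 : pderiv (0:Fin 3) Fpol = (X 2:R3)^2 - (1:R3)*(X 1:R3)^2 - (2:R3)*(X 0:R3)*(X 2:R3) + (2:R3)*(X 0:R3)*(X 1:R3) := by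
  simp [Fpol, Xv, Yv, Zv, Derivation.leibniz, Pi.single_apply]
  ring

lemma dF1 : pderiv (1:Fin 3) Fpol = (-1:R3)*(X 2:R3)^2 + (2:R3)*(X 1:R3)*(X 2:R3) - (2:R3)*(X 0:R3)*(X 1:R3) + (X 0:R3)^2 := by
  simp [Fpol, Xv, Yv, Zv, Derivation.leibniz, Pi.single_apply]
  ring

lemma dF2 : pderiv (2:Fin 3) Fpol = (-2:R3)*(X 1:R3)*(X 2:R3) + (X 1:R3)^2 + (2:R3)*(X 0:R3)*(X 2:R3) - (1:R3)*(X 0:R3)^2 := by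
  simp [Fpol, Xv, Yv, Zv, Derivation.leibniz, Pi.single_apply]
  ring

lemma dG0 : pderiv (0:Fin 3) Gpol = (-1:R3)*(X 2:R3)^2*(C τ:R3) + (X 1:R3)^2*(C τ:R3)^3 + (2:R3)*(X 0:R3)*(X 2:R3)*(C τ:R3)^3 - (2:R3)*(X 0:R3)*(X 1:R3)*(C τ:R3)^4 := by
  simp [Gpol, Xv, Yv, Zv, Derivation.leibniz, Pi.single_apply]
  ring

lemma dG1 : pderiv (1:Fin 3) Gpol = (X 2:R3)^2 - (2:R3)*(X 1:R3)*(X 2:R3)*(C τ:R3) + (2:R3)*(X 0:R3)*(X 1:R3)*(C τ:R3)^3 - (1:R3)*(X 0:R3)^2*(C τ:R3)^4 := by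
  simp [Gpol, Xv, Yv, Zv, Derivation.leibniz, Pi.single_apply]
  ring

lemma dG2 : pderiv (2:Fin 3) Gpol = (2:R3)*(X 1:R3)*(X 2:R3) - (1:R3)*(X 1:R3)^2*(C τ:R3) - (2:R3)*(X 0:R3)*(X 2:R3)*(C τ:R3) + (X 0:R3)^2*(C τ:R3)^3 := by
  simp [Gpol, Xv, Yv, Zv, Derivation.leibniz, Pi.single_apply]
  ring

lemma finmk2 : (⟨2, by norm_num⟩ : Fin 3) = 2 := rfl

set_option maxHeartbeats 1600000 in
theorem stmt_11 : WedgeZero (fun i => Om i + Xi i) (pencilForm Fpol Gpol) := by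
  have hτ3 : τ ^ 3 = 1 := by
    have h : IsPrimitiveRoot τ 3 := Complex.isPrimitiveRoot_exp 3 (by norm_num)
    simpa using h.pow_eq_one
  have hτ1 : τ ≠ 1 := by
    have h : IsPrimitiveRoot τ 3 := Complex.isPrimitiveRoot_exp 3 (by norm_num)
    exact h.ne_one (by norm_num)
  have hτ : τ ^ 2 + τ + 1 = 0 := by
    have h0 : (τ - 1) * (τ ^ 2 + τ + 1) = 0 := by linear_combination hτ3
    rcases mul_eq_zero.mp h0 with h | h
    · exact ((hτ1 (sub_eq_zero.mp h))).elim
    · exact h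
  have ht : (C τ : R3) ^ 2 + C τ + 1 = 0 := by
    have h1 : (C (τ ^ 2 + τ + 1) : R3) = C 0 := by rw [hτ]
    simpa [C_add, C_pow] using h1
  intro i j
  fin_cases i <;> fin_cases j <;>
    (simp only [Fin.mk_zero, Fin.mk_one, finmk2, Om, Xi, pencilForm, dF0, dF1, dF2, dG0, dG1, dG2,
      Matrix.cons_val_zero, Matrix.cons_val_one, Matrix.head_cons,
      Matrix.cons_val_two, Matrix.tail_cons, Fin.isValue];
     simp only [Fpol, Gpol, Xv, Yv, Zv])
  case _ => ring
  case _ => linear_combination ((-1:R3)*(X 1:R3)^5*(X 2:R3)^5 + (X 1:R3)^5*(X 2:R3)^5*(C τ:R3) + (X 1:R3)^6*(X 2:R3)^4 - (1:R3)*(X 1:R3)^6*(X 2:R3)^4*(C τ:R3) + (X 0:R3)*(X 1:R3)^4*(X 2:R3)^5 + (X 0:R3)*(X 1:R3)^4*(X 2:R3)^5*(C τ:R3) - (2:R3)*(X 0:R3)*(X 1:R3)^4*(X 2:R3)^5*(C τ:R3)^2 - (2:R3)*(X 0:R3)*(X 1:R3)^5*(X 2:R3)^4*(C τ:R3) + (2:R3)*(X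 0:R3)*(X 1:R3)^5*(X 2:R3)^4*(C τ:R3)^2 - (1:R3)*(X 0:R3)*(X 1:R3)^6*(X 2:R3)^3 + (X 0:R3)*(X 1:R3)^6*(X 2:R3)^3*(C τ:R3) + (X 0:R3)^2*(X 1:R3)*(X 2:R3)^7 - (1:R3)*(X 0:R3)^2*(X 1:R3)*(X 2:R3)^7*(C τ:R3) - (1:R3)*(X 0:R3)^2*(X 1:R3)^2*(X 2:R3)^6 - (1:R3)*(X 0:R3)^2*(X 1:R3)^2*(X 2:R3)^6*(C τ:R3) + (2:R3)*(X 0:R3)^2*(X 1:R3)^2*(X 2:R3)^6*(C τ:R3)^2 + (X 0:R3)^2*(X 1:R3)^4*(X 2:R3)^4 - (1:R3)*(X 0:R3)^2*(X 1:R3)^4*(X 2:R3)^4*(C τ:R3) - (1:R3)*(X 0:R3)^2*(X 1:R3)^5*(X 2:R3)^3 + (2:R3)*(X 0:R3)^2*(X 1:R3)^5*(X 2:R3)^3*(C τ:R3) - (1:R3)*(X 0:R3)^2*(X 1:R3)^5*(X 2:R3)^3*(C τ:R3)^2 + (X 0:R3)^2*(X 1:R3)^6*(X 2:R3)^2*(C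 τ:R3) - (1:R3)*(X 0:R3)^2*(X 1:R3)^6*(X 2:R3)^2*(C τ:R3)^2 - (1:R3)*(X 0:R3)^3*(X 2:R3)^7 + (X 0:R3)^3*(X 2:R3)^7*(C τ:R3) + (2:R3)*(X 0:R3)^3*(X 1:R3)*(X 2:R3)^6*(C τ:R3) - (2:R3)*(X 0:R3)^3*(X 1:R3)*(X 2:R3)^6*(C τ:R3)^2 - (1:R3)*(X 0:R3)^3*(X 1:R3)^2*(X 2:R3)^5 + (X 0:R3)^3*(X 1:R3)^2*(X 2:R3)^5*(C τ:R3) - (1:R3)*(X 0:R3)^3*(X 1:R3)^4*(X 2:R3)^3*(C τ:R3) + (X 0:R3)^3*(X 1:R3)^4*(X 2:R3)^3*(C τ:R3)^2 + (2:R3)*(X 0:R3)^3*(X 1:R3)^5*(X 2:R3)^2 - (2:R3)*(X 0:R3)^3*(X 1:R3)^5*(X 2:R3)^2*(C τ:R3) - (1:R3)*(X 0:R3)^3*(X 1:R3)^6*(X 2:R3)*(C τ:R3) + (X 0:R3)^3*(X 1:R3)^6*(X 2:R3)*(C τ:R3)^2 + (X 0:R3)^4*(X 2:R3)^6 - (1:R3)*(X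 0:R3)^4*(X 2:R3)^6*(C τ:R3) + (X 0:R3)^4*(X 1:R3)*(X 2:R3)^5 - (2:R3)*(X 0:R3)^4*(X 1:R3)*(X 2:R3)^5*(C τ:R3) + (X 0:R3)^4*(X 1:R3)*(X 2:R3)^5*(C τ:R3)^2 + (X 0:R3)^4*(X 1:R3)^2*(X 2:R3)^4*(C τ:R3) - (1:R3)*(X 0:R3)^4*(X 1:R3)^2*(X 2:R3)^4*(C τ:R3)^2 - (2:R3)*(X 0:R3)^4*(X 1:R3)^4*(X 2:R3)^2 + (X 0:R3)^4*(X 1:R3)^4*(X 2:R3)^2*(C τ:R3) + (X 0:R3)^4*(X 1:R3)^4*(X 2:R3)^2*(C τ:R3)^2 + (X 0:R3)^4*(X 1:R3)^5*(X 2:R3)*(C τ:R3) - (1:R3)*(X 0:R3)^4*(X 1:R3)^5*(X 2:R3)*(C τ:R3)^2 - (1:R3)*(X 0:R3)^5*(X 2:R3)^5*(C τ:R3) + (X 0:R3)^5*(X 2:R3)^5*(C τ:R3)^2 - (2:R3)*(X 0:R3)^5*(X 1:R3)*(X 2:R3)^4 + (2:R3)*(X 0:R3)^5*(X 1:R3)*(X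 2:R3)^4*(C τ:R3) + (2:R3)*(X 0:R3)^5*(X 1:R3)^2*(X 2:R3)^3 - (1:R3)*(X 0:R3)^5*(X 1:R3)^2*(X 2:R3)^3*(C τ:R3) - (1:R3)*(X 0:R3)^5*(X 1:R3)^2*(X 2:R3)^3*(C τ:R3)^2 + (X 0:R3)^6*(X 2:R3)^4*(C τ:R3) - (1:R3)*(X 0:R3)^6*(X 2:R3)^4*(C τ:R3)^2 - (1:R3)*(X 0:R3)^6*(X 1:R3)*(X 2:R3)^3*(C τ:R3) + (X 0:R3)^6*(X 1:R3)*(X 2:R3)^3*(C τ:R3)^2) * ht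
  case _ => linear_combination ((X 1:R3)^6*(X 2:R3)^4 - (1:R3)*(X 1:R3)^6*(X 2:R3)^4*(C τ:R3) - (1:R3)*(X 1:R3)^7*(X 2:R3)^3 + (X 1:R3)^7*(X 2:R3)^3*(C τ:R3) - (1:R3)*(X 0:R3)*(X 1:R3)^5*(X 2:R3)^4 - (1:R3)*(X 0:R3)*(X 1:R3)^5*(X 2:R3)^4*(C τ:R3) + (2:R3)*(X 0:R3)*(X 1:R3)^5*(X 2:R3)^4*(C τ:R3)^2 + (2:R3)*(X 0:R3)*(X 1:R3)^6*(X 2:R3)^3*(C τ:R3) - (2:R3)*(X 0:R3)*(X 1:R3)^6*(X 2:R3)^3*(C τ:R3)^2 + (X 0:R3)*(X 1:R3)^7*(X 2:R3)^2 - (1:R3)*(X 0:R3)*(X 1:R3)^7*(X 2:R3)^2*(C τ:R3) - (1:R3)*(X 0:R3)^2*(X 1:R3)^2*(X 2:R3)^6 + (X 0:R3)^2*(X 1:R3)^2*(X 2:R3)^6*(C τ:R3) + (X 0:R3)^2*(X 1:R3)^3*(X 2:R3)^5 + (X 0:R3)^2*(X 1:R3)^3*(X 2:R3)^5*(C τ:R3)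 - (2:R3)*(X 0:R3)^2*(X 1:R3)^3*(X 2:R3)^5*(C τ:R3)^2 - (1:R3)*(X 0:R3)^2*(X 1:R3)^5*(X 2:R3)^3 + (X 0:R3)^2*(X 1:R3)^5*(X 2:R3)^3*(C τ:R3) + (X 0:R3)^2*(X 1:R3)^6*(X 2:R3)^2 - (2:R3)*(X 0:R3)^2*(X 1:R3)^6*(X 2:R3)^2*(C τ:R3) + (X 0:R3)^2*(X 1:R3)^6*(X 2:R3)^2*(C τ:R3)^2 - (1:R3)*(X 0:R3)^2*(X 1:R3)^7*(X 2:R3)*(C τ:R3) + (X 0:R3)^2*(X 1:R3)^7*(X 2:R3)*(C τ:R3)^2 + (X 0:R3)^3*(X 1:R3)*(X 2:R3)^6 - (1:R3)*(X 0:R3)^3*(X 1:R3)*(X 2:R3)^6*(C τ:R3) - (2:R3)*(X 0:R3)^3*(X 1:R3)^2*(X 2:R3)^5*(C τ:R3) + (2:R3)*(X 0:R3)^3*(X 1:R3)^2*(X 2:R3)^5*(C τ:R3)^2 + (X 0:R3)^3*(X 1:R3)^3*(X 2:R3)^4 - (1:R3)*(X 0:R3)^3*(X 1:R3)^3*(X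 2:R3)^4*(C τ:R3) + (X 0:R3)^3*(X 1:R3)^5*(X 2:R3)^2*(C τ:R3) - (1:R3)*(X 0:R3)^3*(X 1:R3)^5*(X 2:R3)^2*(C τ:R3)^2 - (2:R3)*(X 0:R3)^3*(X 1:R3)^6*(X 2:R3) + (2:R3)*(X 0:R3)^3*(X 1:R3)^6*(X 2:R3)*(C τ:R3) + (X 0:R3)^3*(X 1:R3)^7*(C τ:R3) - (1:R3)*(X 0:R3)^3*(X 1:R3)^7*(C τ:R3)^2 - (1:R3)*(X 0:R3)^4*(X 1:R3)*(X 2:R3)^5 + (X 0:R3)^4*(X 1:R3)*(X 2:R3)^5*(C τ:R3) - (1:R3)*(X 0:R3)^4*(X 1:R3)^2*(X 2:R3)^4 + (2:R3)*(X 0:R3)^4*(X 1:R3)^2*(X 2:R3)^4*(C τ:R3) - (1:R3)*(X 0:R3)^4*(X 1:R3)^2*(X 2:R3)^4*(C τ:R3)^2 - (1:R3)*(X 0:R3)^4*(X 1:R3)^3*(X 2:R3)^3*(C τ:R3) + (X 0:R3)^4*(X 1:R3)^3*(X 2:R3)^3*(C τ:R3)^2 + (2:R3)*(X 0:R3)^4*(X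 1:R3)^5*(X 2:R3) - (1:R3)*(X 0:R3)^4*(X 1:R3)^5*(X 2:R3)*(C τ:R3) - (1:R3)*(X 0:R3)^4*(X 1:R3)^5*(X 2:R3)*(C τ:R3)^2 - (1:R3)*(X 0:R3)^4*(X 1:R3)^6*(C τ:R3) + (X 0:R3)^4*(X 1:R3)^6*(C τ:R3)^2 + (X 0:R3)^5*(X 1:R3)*(X 2:R3)^4*(C τ:R3) - (1:R3)*(X 0:R3)^5*(X 1:R3)*(X 2:R3)^4*(C τ:R3)^2 + (2:R3)*(X 0:R3)^5*(X 1:R3)^2*(X 2:R3)^3 - (2:R3)*(X 0:R3)^5*(X 1:R3)^2*(X 2:R3)^3*(C τ:R3) - (2:R3)*(X 0:R3)^5*(X 1:R3)^3*(X 2:R3)^2 + (X 0:R3)^5*(X 1:R3)^3*(X 2:R3)^2*(C τ:R3) + (X 0:R3)^5*(X 1:R3)^3*(X 2:R3)^2*(C τ:R3)^2 - (1:R3)*(X 0:R3)^6*(X 1:R3)*(X 2:R3)^3*(C τ:R3) + (X 0:R3)^6*(X 1:R3)*(X 2:R3)^3*(C τ:R3)^2 + (X 0:R3)^6*(X 1:R3)^2*(X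 2:R3)^2*(C τ:R3) - (1:R3)*(X 0:R3)^6*(X 1:R3)^2*(X 2:R3)^2*(C τ:R3)^2) * ht
  case _ => linear_combination ((X 1:R3)^5*(X 2:R3)^5 - (1:R3)*(X 1:R3)^5*(X 2:R3)^5*(C τ:R3) - (1:R3)*(X 1:R3)^6*(X 2:R3)^4 + (X 1:R3)^6*(X 2:R3)^4*(C τ:R3) - (1:R3)*(X 0:R3)*(X 1:R3)^4*(X 2:R3)^5 - (1:R3)*(X 0:R3)*(X 1:R3)^4*(X 2:R3)^5*(C τ:R3) + (2:R3)*(X 0:R3)*(X 1:R3)^4*(X 2:R3)^5*(C τ:R3)^2 + (2:R3)*(X 0:R3)*(X 1:R3)^5*(X 2:R3)^4*(C τ:R3) - (2:R3)*(X 0:R3)*(X 1:R3)^5*(X 2:R3)^4*(C τ:R3)^2 + (X 0:R3)*(X 1:R3)^6*(X 2:R3)^3 - (1:R3)*(X 0:R3)*(X 1:R3)^6*(X 2:R3)^3*(C τ:R3) - (1:R3)*(X 0:R3)^2*(X 1:R3)*(X 2:R3)^7 + (X 0:R3)^2*(X 1:R3)*(X 2:R3)^7*(C τ:R3) + (X 0:R3)^2*(X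 1:R3)^2*(X 2:R3)^6 + (X 0:R3)^2*(X 1:R3)^2*(X 2:R3)^6*(C τ:R3) - (2:R3)*(X 0:R3)^2*(X 1:R3)^2*(X 2:R3)^6*(C τ:R3)^2 - (1:R3)*(X 0:R3)^2*(X 1:R3)^4*(X 2:R3)^4 + (X 0:R3)^2*(X 1:R3)^4*(X 2:R3)^4*(C τ:R3) + (X 0:R3)^2*(X 1:R3)^5*(X 2:R3)^3 - (2:R3)*(X 0:R3)^2*(X 1:R3)^5*(X 2:R3)^3*(C τ:R3) + (X 0:R3)^2*(X 1:R3)^5*(X 2:R3)^3*(C τ:R3)^2 - (1:R3)*(X 0:R3)^2*(X 1:R3)^6*(X 2:R3)^2*(C τ:R3) + (X 0:R3)^2*(X 1:R3)^6*(X 2:R3)^2*(C τ:R3)^2 + (X 0:R3)^3*(X 2:R3)^7 - (1:R3)*(X 0:R3)^3*(X 2:R3)^7*(C τ:R3) - (2:R3)*(X 0:R3)^3*(X 1:R3)*(X 2:R3)^6*(C τ:R3) + (2:R3)*(X 0:R3)^3*(X 1:R3)*(X 2:R3)^6*(C τ:R3)^2 + (X 0:R3)^3*(X 1:R3)^2*(X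 2:R3)^5 - (1:R3)*(X 0:R3)^3*(X 1:R3)^2*(X 2:R3)^5*(C τ:R3) + (X 0:R3)^3*(X 1:R3)^4*(X 2:R3)^3*(C τ:R3) - (1:R3)*(X 0:R3)^3*(X 1:R3)^4*(X 2:R3)^3*(C τ:R3)^2 - (2:R3)*(X 0:R3)^3*(X 1:R3)^5*(X 2:R3)^2 + (2:R3)*(X 0:R3)^3*(X 1:R3)^5*(X 2:R3)^2*(C τ:R3) + (X 0:R3)^3*(X 1:R3)^6*(X 2:R3)*(C τ:R3) - (1:R3)*(X 0:R3)^3*(X 1:R3)^6*(X 2:R3)*(C τ:R3)^2 - (1:R3)*(X 0:R3)^4*(X 2:R3)^6 + (X 0:R3)^4*(X 2:R3)^6*(C τ:R3) - (1:R3)*(X 0:R3)^4*(X 1:R3)*(X 2:R3)^5 + (2:R3)*(X 0:R3)^4*(X 1:R3)*(X 2:R3)^5*(C τ:R3) - (1:R3)*(X 0:R3)^4*(X 1:R3)*(X 2:R3)^5*(C τ:R3)^2 - (1:R3)*(X 0:R3)^4*(X 1:R3)^2*(X 2:R3)^4*(C τ:R3) + (X 0:R3)^4*(X 1:R3)^2*(X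 2:R3)^4*(C τ:R3)^2 + (2:R3)*(X 0:R3)^4*(X 1:R3)^4*(X 2:R3)^2 - (1:R3)*(X 0:R3)^4*(X 1:R3)^4*(X 2:R3)^2*(C τ:R3) - (1:R3)*(X 0:R3)^4*(X 1:R3)^4*(X 2:R3)^2*(C τ:R3)^2 - (1:R3)*(X 0:R3)^4*(X 1:R3)^5*(X 2:R3)*(C τ:R3) + (X 0:R3)^4*(X 1:R3)^5*(X 2:R3)*(C τ:R3)^2 + (X 0:R3)^5*(X 2:R3)^5*(C τ:R3) - (1:R3)*(X 0:R3)^5*(X 2:R3)^5*(C τ:R3)^2 + (2:R3)*(X 0:R3)^5*(X 1:R3)*(X 2:R3)^4 - (2:R3)*(X 0:R3)^5*(X 1:R3)*(X 2:R3)^4*(C τ:R3) - (2:R3)*(X 0:R3)^5*(X 1:R3)^2*(X 2:R3)^3 + (X 0:R3)^5*(X 1:R3)^2*(X 2:R3)^3*(C τ:R3) + (X 0:R3)^5*(X 1:R3)^2*(X 2:R3)^3*(C τ:R3)^2 - (1:R3)*(X 0:R3)^6*(X 2:R3)^4*(C τ:R3) + (X 0:R3)^6*(X 2:R3)^4*(C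 τ:R3)^2 + (X 0:R3)^6*(X 1:R3)*(X 2:R3)^3*(C τ:R3) - (1:R3)*(X 0:R3)^6*(X 1:R3)*(X 2:R3)^3*(C τ:R3)^2) * ht
  case _ => ring
  case _ => linear_combination ((-1:R3)*(X 0:R3)*(X 1:R3)^5*(X 2:R3)^4 + (X 0:R3)*(X 1:R3)^5*(X 2:R3)^4*(C τ:R3) + (X 0:R3)*(X 1:R3)^6*(X 2:R3)^3 - (1:R3)*(X 0:R3)*(X 1:R3)^6*(X 2:R3)^3*(C τ:R3) + (X 0:R3)^2*(X 1:R3)^4*(X 2:R3)^4 + (X 0:R3)^2*(X 1:R3)^4*(X 2:R3)^4*(C τ:R3) - (2:R3)*(X 0:R3)^2*(X 1:R3)^4*(X 2:R3)^4*(C τ:R3)^2 - (2:R3)*(X 0:R3)^2*(X 1:R3)^5*(X 2:R3)^3*(C τ:R3) + (2:R3)*(X 0:R3)^2*(X 1:R3)^5*(X 2:R3)^3*(C τ:R3)^2 - (1:R3)*(X 0:R3)^2*(X 1:R3)^6*(X 2:R3)^2 + (X 0:R3)^2*(X 1:R3)^6*(X 2:R3)^2*(C τ:R3) + (X 0:R3)^3*(X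 1:R3)*(X 2:R3)^6 - (1:R3)*(X 0:R3)^3*(X 1:R3)*(X 2:R3)^6*(C τ:R3) - (1:R3)*(X 0:R3)^3*(X 1:R3)^2*(X 2:R3)^5 - (1:R3)*(X 0:R3)^3*(X 1:R3)^2*(X 2:R3)^5*(C τ:R3) + (2:R3)*(X 0:R3)^3*(X 1:R3)^2*(X 2:R3)^5*(C τ:R3)^2 + (X 0:R3)^3*(X 1:R3)^4*(X 2:R3)^3 - (1:R3)*(X 0:R3)^3*(X 1:R3)^4*(X 2:R3)^3*(C τ:R3) - (1:R3)*(X 0:R3)^3*(X 1:R3)^5*(X 2:R3)^2 + (2:R3)*(X 0:R3)^3*(X 1:R3)^5*(X 2:R3)^2*(C τ:R3) - (1:R3)*(X 0:R3)^3*(X 1:R3)^5*(X 2:R3)^2*(C τ:R3)^2 + (X 0:R3)^3*(X 1:R3)^6*(X 2:R3)*(C τ:R3) - (1:R3)*(X 0:R3)^3*(X 1:R3)^6*(X 2:R3)*(C τ:R3)^2 - (1:R3)*(X 0:R3)^4*(X 2:R3)^6 + (X 0:R3)^4*(X 2:R3)^6*(C τ:R3) + (2:R3)*(X 0:R3)^4*(X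 1:R3)*(X 2:R3)^5*(C τ:R3) - (2:R3)*(X 0:R3)^4*(X 1:R3)*(X 2:R3)^5*(C τ:R3)^2 - (1:R3)*(X 0:R3)^4*(X 1:R3)^2*(X 2:R3)^4 + (X 0:R3)^4*(X 1:R3)^2*(X 2:R3)^4*(C τ:R3) - (1:R3)*(X 0:R3)^4*(X 1:R3)^4*(X 2:R3)^2*(C τ:R3) + (X 0:R3)^4*(X 1:R3)^4*(X 2:R3)^2*(C τ:R3)^2 + (2:R3)*(X 0:R3)^4*(X 1:R3)^5*(X 2:R3) - (2:R3)*(X 0:R3)^4*(X 1:R3)^5*(X 2:R3)*(C τ:R3) - (1:R3)*(X 0:R3)^4*(X 1:R3)^6*(C τ:R3) + (X 0:R3)^4*(X 1:R3)^6*(C τ:R3)^2 + (X 0:R3)^5*(X 2:R3)^5 - (1:R3)*(X 0:R3)^5*(X 2:R3)^5*(C τ:R3) + (X 0:R3)^5*(X 1:R3)*(X 2:R3)^4 - (2:R3)*(X 0:R3)^5*(X 1:R3)*(X 2:R3)^4*(C τ:R3) + (X 0:R3)^5*(X 1:R3)*(X 2:R3)^4*(C τ:R3)^2 + (X 0:R3)^5*(X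 1:R3)^2*(X 2:R3)^3*(C τ:R3) - (1:R3)*(X 0:R3)^5*(X 1:R3)^2*(X 2:R3)^3*(C τ:R3)^2 - (2:R3)*(X 0:R3)^5*(X 1:R3)^4*(X 2:R3) + (X 0:R3)^5*(X 1:R3)^4*(X 2:R3)*(C τ:R3) + (X 0:R3)^5*(X 1:R3)^4*(X 2:R3)*(C τ:R3)^2 + (X 0:R3)^5*(X 1:R3)^5*(C τ:R3) - (1:R3)*(X 0:R3)^5*(X 1:R3)^5*(C τ:R3)^2 - (1:R3)*(X 0:R3)^6*(X 2:R3)^4*(C τ:R3) + (X 0:R3)^6*(X 2:R3)^4*(C τ:R3)^2 - (2:R3)*(X 0:R3)^6*(X 1:R3)*(X 2:R3)^3 + (2:R3)*(X 0:R3)^6*(X 1:R3)*(X 2:R3)^3*(C τ:R3) + (2:R3)*(X 0:R3)^6*(X 1:R3)^2*(X 2:R3)^2 - (1:R3)*(X 0:R3)^6*(X 1:R3)^2*(X 2:R3)^2*(C τ:R3) - (1:R3)*(X 0:R3)^6*(X 1:R3)^2*(X 2:R3)^2*(C τ:R3)^2 + (X 0:R3)^7*(X 2:R3)^3*(C τ:R3)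 - (1:R3)*(X 0:R3)^7*(X 2:R3)^3*(C τ:R3)^2 - (1:R3)*(X 0:R3)^7*(X 1:R3)*(X 2:R3)^2*(C τ:R3) + (X 0:R3)^7*(X 1:R3)*(X 2:R3)^2*(C τ:R3)^2) * ht
  case _ => linear_combination ((-1:R3)*(X 1:R3)^6*(X 2:R3)^4 + (X 1:R3)^6*(X 2:R3)^4*(C τ:R3) + (X 1:R3)^7*(X 2:R3)^3 - (1:R3)*(X 1:R3)^7*(X 2:R3)^3*(C τ:R3) + (X 0:R3)*(X 1:R3)^5*(X 2:R3)^4 + (X 0:R3)*(X 1:R3)^5*(X 2:R3)^4*(C τ:R3) - (2:R3)*(X 0:R3)*(X 1:R3)^5*(X 2:R3)^4*(C τ:R3)^2 - (2:R3)*(X 0:R3)*(X 1:R3)^6*(X 2:R3)^3*(C τ:R3) + (2:R3)*(X 0:R3)*(X 1:R3)^6*(X 2:R3)^3*(C τ:R3)^2 - (1:R3)*(X 0:R3)*(X 1:R3)^7*(X 2:R3)^2 + (X 0:R3)*(X 1:R3)^7*(X 2:R3)^2*(C τ:R3) + (X 0:R3)^2*(X 1:R3)^2*(X 2:R3)^6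 - (1:R3)*(X 0:R3)^2*(X 1:R3)^2*(X 2:R3)^6*(C τ:R3) - (1:R3)*(X 0:R3)^2*(X 1:R3)^3*(X 2:R3)^5 - (1:R3)*(X 0:R3)^2*(X 1:R3)^3*(X 2:R3)^5*(C τ:R3) + (2:R3)*(X 0:R3)^2*(X 1:R3)^3*(X 2:R3)^5*(C τ:R3)^2 + (X 0:R3)^2*(X 1:R3)^5*(X 2:R3)^3 - (1:R3)*(X 0:R3)^2*(X 1:R3)^5*(X 2:R3)^3*(C τ:R3) - (1:R3)*(X 0:R3)^2*(X 1:R3)^6*(X 2:R3)^2 + (2:R3)*(X 0:R3)^2*(X 1:R3)^6*(X 2:R3)^2*(C τ:R3) - (1:R3)*(X 0:R3)^2*(X 1:R3)^6*(X 2:R3)^2*(C τ:R3)^2 + (X 0:R3)^2*(X 1:R3)^7*(X 2:R3)*(C τ:R3) - (1:R3)*(X 0:R3)^2*(X 1:R3)^7*(X 2:R3)*(C τ:R3)^2 - (1:R3)*(X 0:R3)^3*(X 1:R3)*(X 2:R3)^6 + (X 0:R3)^3*(X 1:R3)*(X 2:R3)^6*(C τ:R3) + (2:R3)*(X 0:R3)^3*(X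 1:R3)^2*(X 2:R3)^5*(C τ:R3) - (2:R3)*(X 0:R3)^3*(X 1:R3)^2*(X 2:R3)^5*(C τ:R3)^2 - (1:R3)*(X 0:R3)^3*(X 1:R3)^3*(X 2:R3)^4 + (X 0:R3)^3*(X 1:R3)^3*(X 2:R3)^4*(C τ:R3) - (1:R3)*(X 0:R3)^3*(X 1:R3)^5*(X 2:R3)^2*(C τ:R3) + (X 0:R3)^3*(X 1:R3)^5*(X 2:R3)^2*(C τ:R3)^2 + (2:R3)*(X 0:R3)^3*(X 1:R3)^6*(X 2:R3) - (2:R3)*(X 0:R3)^3*(X 1:R3)^6*(X 2:R3)*(C τ:R3) - (1:R3)*(X 0:R3)^3*(X 1:R3)^7*(C τ:R3) + (X 0:R3)^3*(X 1:R3)^7*(C τ:R3)^2 + (X 0:R3)^4*(X 1:R3)*(X 2:R3)^5 - (1:R3)*(X 0:R3)^4*(X 1:R3)*(X 2:R3)^5*(C τ:R3) + (X 0:R3)^4*(X 1:R3)^2*(X 2:R3)^4 - (2:R3)*(X 0:R3)^4*(X 1:R3)^2*(X 2:R3)^4*(C τ:R3) + (X 0:R3)^4*(X 1:R3)^2*(X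 2:R3)^4*(C τ:R3)^2 + (X 0:R3)^4*(X 1:R3)^3*(X 2:R3)^3*(C τ:R3) - (1:R3)*(X 0:R3)^4*(X 1:R3)^3*(X 2:R3)^3*(C τ:R3)^2 - (2:R3)*(X 0:R3)^4*(X 1:R3)^5*(X 2:R3) + (X 0:R3)^4*(X 1:R3)^5*(X 2:R3)*(C τ:R3) + (X 0:R3)^4*(X 1:R3)^5*(X 2:R3)*(C τ:R3)^2 + (X 0:R3)^4*(X 1:R3)^6*(C τ:R3) - (1:R3)*(X 0:R3)^4*(X 1:R3)^6*(C τ:R3)^2 - (1:R3)*(X 0:R3)^5*(X 1:R3)*(X 2:R3)^4*(C τ:R3) + (X 0:R3)^5*(X 1:R3)*(X 2:R3)^4*(C τ:R3)^2 - (2:R3)*(X 0:R3)^5*(X 1:R3)^2*(X 2:R3)^3 + (2:R3)*(X 0:R3)^5*(X 1:R3)^2*(X 2:R3)^3*(C τ:R3) + (2:R3)*(X 0:R3)^5*(X 1:R3)^3*(X 2:R3)^2 - (1:R3)*(X 0:R3)^5*(X 1:R3)^3*(X 2:R3)^2*(C τ:R3) - (1:R3)*(X 0:R3)^5*(X 1:R3)^3*(X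 2:R3)^2*(C τ:R3)^2 + (X 0:R3)^6*(X 1:R3)*(X 2:R3)^3*(C τ:R3) - (1:R3)*(X 0:R3)^6*(X 1:R3)*(X 2:R3)^3*(C τ:R3)^2 - (1:R3)*(X 0:R3)^6*(X 1:R3)^2*(X 2:R3)^2*(C τ:R3) + (X 0:R3)^6*(X 1:R3)^2*(X 2:R3)^2*(C τ:R3)^2) * ht
  case _ => linear_combination ((X 0:R3)*(X 1:R3)^5*(X 2:R3)^4 - (1:R3)*(X 0:R3)*(X 1:R3)^5*(X 2:R3)^4*(C τ:R3) - (1:R3)*(X 0:R3)*(X 1:R3)^6*(X 2:R3)^3 + (X 0:R3)*(X 1:R3)^6*(X 2:R3)^3*(C τ:R3) - (1:R3)*(X 0:R3)^2*(X 1:R3)^4*(X 2:R3)^4 - (1:R3)*(X 0:R3)^2*(X 1:R3)^4*(X 2:R3)^4*(C τ:R3) + (2:R3)*(X 0:R3)^2*(X 1:R3)^4*(X 2:R3)^4*(C τ:R3)^2 + (2:R3)*(X 0:R3)^2*(X 1:R3)^5*(X 2:R3)^3*(C τ:R3) - (2:R3)*(X 0:R3)^2*(X 1:R3)^5*(X 2:R3)^3*(C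 τ:R3)^2 + (X 0:R3)^2*(X 1:R3)^6*(X 2:R3)^2 - (1:R3)*(X 0:R3)^2*(X 1:R3)^6*(X 2:R3)^2*(C τ:R3) - (1:R3)*(X 0:R3)^3*(X 1:R3)*(X 2:R3)^6 + (X 0:R3)^3*(X 1:R3)*(X 2:R3)^6*(C τ:R3) + (X 0:R3)^3*(X 1:R3)^2*(X 2:R3)^5 + (X 0:R3)^3*(X 1:R3)^2*(X 2:R3)^5*(C τ:R3) - (2:R3)*(X 0:R3)^3*(X 1:R3)^2*(X 2:R3)^5*(C τ:R3)^2 - (1:R3)*(X 0:R3)^3*(X 1:R3)^4*(X 2:R3)^3 + (X 0:R3)^3*(X 1:R3)^4*(X 2:R3)^3*(C τ:R3) + (X 0:R3)^3*(X 1:R3)^5*(X 2:R3)^2 - (2:R3)*(X 0:R3)^3*(X 1:R3)^5*(X 2:R3)^2*(C τ:R3) + (X 0:R3)^3*(X 1:R3)^5*(X 2:R3)^2*(C τ:R3)^2 - (1:R3)*(X 0:R3)^3*(X 1:R3)^6*(X 2:R3)*(C τ:R3) + (X 0:R3)^3*(X 1:R3)^6*(X 2:R3)*(C τ:R3)^2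 + (X 0:R3)^4*(X 2:R3)^6 - (1:R3)*(X 0:R3)^4*(X 2:R3)^6*(C τ:R3) - (2:R3)*(X 0:R3)^4*(X 1:R3)*(X 2:R3)^5*(C τ:R3) + (2:R3)*(X 0:R3)^4*(X 1:R3)*(X 2:R3)^5*(C τ:R3)^2 + (X 0:R3)^4*(X 1:R3)^2*(X 2:R3)^4 - (1:R3)*(X 0:R3)^4*(X 1:R3)^2*(X 2:R3)^4*(C τ:R3) + (X 0:R3)^4*(X 1:R3)^4*(X 2:R3)^2*(C τ:R3) - (1:R3)*(X 0:R3)^4*(X 1:R3)^4*(X 2:R3)^2*(C τ:R3)^2 - (2:R3)*(X 0:R3)^4*(X 1:R3)^5*(X 2:R3) + (2:R3)*(X 0:R3)^4*(X 1:R3)^5*(X 2:R3)*(C τ:R3) + (X 0:R3)^4*(X 1:R3)^6*(C τ:R3) - (1:R3)*(X 0:R3)^4*(X 1:R3)^6*(C τ:R3)^2 - (1:R3)*(X 0:R3)^5*(X 2:R3)^5 + (X 0:R3)^5*(X 2:R3)^5*(C τ:R3) - (1:R3)*(X 0:R3)^5*(X 1:R3)*(X 2:R3)^4 + (2:R3)*(X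 0:R3)^5*(X 1:R3)*(X 2:R3)^4*(C τ:R3) - (1:R3)*(X 0:R3)^5*(X 1:R3)*(X 2:R3)^4*(C τ:R3)^2 - (1:R3)*(X 0:R3)^5*(X 1:R3)^2*(X 2:R3)^3*(C τ:R3) + (X 0:R3)^5*(X 1:R3)^2*(X 2:R3)^3*(C τ:R3)^2 + (2:R3)*(X 0:R3)^5*(X 1:R3)^4*(X 2:R3) - (1:R3)*(X 0:R3)^5*(X 1:R3)^4*(X 2:R3)*(C τ:R3) - (1:R3)*(X 0:R3)^5*(X 1:R3)^4*(X 2:R3)*(C τ:R3)^2 - (1:R3)*(X 0:R3)^5*(X 1:R3)^5*(C τ:R3) + (X 0:R3)^5*(X 1:R3)^5*(C τ:R3)^2 + (X 0:R3)^6*(X 2:R3)^4*(C τ:R3) - (1:R3)*(X 0:R3)^6*(X 2:R3)^4*(C τ:R3)^2 + (2:R3)*(X 0:R3)^6*(X 1:R3)*(X 2:R3)^3 - (2:R3)*(X 0:R3)^6*(X 1:R3)*(X 2:R3)^3*(C τ:R3) - (2:R3)*(X 0:R3)^6*(X 1:R3)^2*(X 2:R3)^2 + (X 0:R3)^6*(X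 1:R3)^2*(X 2:R3)^2*(C τ:R3) + (X 0:R3)^6*(X 1:R3)^2*(X 2:R3)^2*(C τ:R3)^2 - (1:R3)*(X 0:R3)^7*(X 2:R3)^3*(C τ:R3) + (X 0:R3)^7*(X 2:R3)^3*(C τ:R3)^2 + (X 0:R3)^7*(X 1:R3)*(X 2:R3)^2*(C τ:R3) - (1:R3)*(X 0:R3)^7*(X 1:R3)*(X 2:R3)^2*(C τ:R3)^2) * ht
  case _ => ring
end
end

section
/- Each of the three linear automorphisms T₁(x,y,z) = (z,x,y), T₂(x,y,z) = (x, τy, τ²z), T₃(x,y,z) = (x, τ²y, τz) acts as the identity on the parameter t of the Lins Neto family: for each T ∈ {T₁, T₂, T₃} there exists a nonzero constant c ∈ ℂ such that T^*Ω = c·Ω and T^*Ξ = c·Ξ (as equalities of the three coefficient polynomials); equivalently, T^*(Ω + t·Ξ) = c·(Ω + t·Ξ) for all t ∈ ℂ. -/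
open MvPolynomial

noncomputable section

def T1 : Fin 3 → R3 := ![Zv, Xv, Yv]
def T2 : Fin 3 → R3 := ![Xv, C τ * Yv, C τ ^ 2 * Zv]
def T3 : Fin 3 → R3 := ![Xv, C τ ^ 2 * Yv, C τ * Zv]

lemma tau_pow3 : τ ^ 3 = 1 := by
  rw [τ, ← Complex.exp_nat_mul]
  rw [show (3:ℕ) * (2 * Real.pi * Complex.I / 3) = 2 * Real.pi * Complex.I by push_cast; ring]
  exact Complex.exp_two_pi_mul_I

lemma Ctau_pow3 : (C τ : R3) ^ 3 = 1 := by rw [← map_pow, tau_pow3, map_one]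

theorem stmt_16 : ∀ T ∈ [T1, T2, T3], ∃ c : ℂ, c ≠ 0 ∧
    pullback T Om = (fun i => C c * Om i) ∧
    pullback T Xi = (fun i => C c * Xi i) := by
  have h3 := Ctau_pow3
  have h4 : (C τ : R3) ^ 4 = C τ := by
    rw [show (4:ℕ) = 3+1 from rfl, pow_add, h3, one_mul, pow_one]
  have h5 : (C τ : R3) ^ 5 = (C τ)^2 := by
    rw [show (5:ℕ) = 3+2 from rfl, pow_add, h3, one_mul]
  have h6 : (C τ : R3) ^ 6 = 1 := by
    rw [show (6:ℕ) = 3+3 from rfl, pow_add, h3, one_mul]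
  have h7 : (C τ : R3) ^ 7 = C τ := by
    rw [show (7:ℕ) = 6+1 from rfl, pow_add, h6, one_mul, pow_one]
  have h8 : (C τ : R3) ^ 8 = (C τ)^2 := by
    rw [show (8:ℕ) = 6+2 from rfl, pow_add, h6, one_mul]
  have h9 : (C τ : R3) ^ 9 = 1 := by
    rw [show (9:ℕ) = 6+3 from rfl, pow_add, h6, h3, one_mul]
  have h10 : (C τ : R3) ^ 10 = C τ := by
    rw [show (10:ℕ) = 9+1 from rfl, pow_add, h9, one_mul, pow_one]
  have h11 : (C τ : R3) ^ 11 = (C τ)^2 := by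
    rw [show (11:ℕ) = 9+2 from rfl, pow_add, h9, one_mul]
  have h12 : (C τ : R3) ^ 12 = 1 := by
    rw [show (12:ℕ) = 9+3 from rfl, pow_add, h9, h3, one_mul]
  intro T hT
  refine ⟨1, one_ne_zero, ?_, ?_⟩ <;>
  · simp only [List.mem_cons, List.not_mem_nil, or_false] at hT
    rcases hT with rfl | rfl | rfl <;>
    · funext i
      fin_cases i <;>
      · simp only [pullback, Fin.sum_univ_three, Om, Xi, T1, T2, T3, Xv, Yv, Zv,
          Matrix.cons_val_zero, Matrix.cons_val_one, Matrix.head_cons,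
          Matrix.cons_val_two, Matrix.tail_cons, map_mul, map_add, map_sub, map_neg,
          map_pow, aeval_X, aeval_C, map_one, pderiv_X, pderiv_C_mul, Fin.isValue]
        simp [Pi.single_apply]
        try ring_nf
        try simp only [h3, h4, h5, h6, h7, h8, h9, h10, h11, h12]
        try ring
end
end
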